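/- arXiv:2501.06765 — 8 statements merged into one kernel-verified Lean document; each statement's English description precedes it below -/
import Mathlib

section
/- Let a be a real number with 0 < a < 1 and define h(x) = x·(1 + a^x)/(1 − a^x) for x > 0 (powers are real powers). Then for all natural numbers ℓ, m ≥ 1 one has the strict inequalities h(ℓ + m) < h(ℓ) + h(m) and h(ℓ) + h(m) < h(ℓ + m) + 2/log(1/a). -/
/-!
Put `t = log (1/a) > 0`. Since `a ^ x = exp (-t x)`, one has `h x = x + (2/t) g (t x)` with
`g s = s / (exp s - 1)`, so both inequalities reduce to `g (p + q) < g p + g q` and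
`g p + g q < g (p + q) + 1` for `p, q > 0`. The first holds because `exp` is increasing. For the
second, write `exp p = u²`, `exp q = v²`; the bound `p < 2 sinh (p/2)`, i.e. `p u < u² - 1`, turns
it into `u + v ≤ u v + 1`, that is `(u - 1)(v - 1) ≥ 0`.
-/

open Real

lemma mul_exp_half_lt_exp_sub_one {p : ℝ} (hp : 0 < p) : p * exp (p / 2) < exp p - 1 := by
  have hsinh : p / 2 < sinh (p / 2) := self_lt_sinh_iff.2 (by positivity)
  rw [sinh_eq, exp_neg] at hsinh
  have hexp : exp p = exp (p / 2) ^ 2 := by rw [sq, ← exp_add, add_halves]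
  have hpos : 0 < exp (p / 2) := exp_pos _
  rw [hexp]
  field_simp at hsinh
  nlinarith

lemma div_sq_sub_one_add_div_sq_sub_one_lt {p q u v : ℝ} (hu : 1 < u) (hv : 1 < v)
    (hpu : p * u < u ^ 2 - 1) (hqv : q * v < v ^ 2 - 1) :
    p / (u ^ 2 - 1) + q / (v ^ 2 - 1) < (p + q) / (u ^ 2 * v ^ 2 - 1) + 1 := by
  have hU : 0 < u ^ 2 - 1 := by nlinarith
  have hV : 0 < v ^ 2 - 1 := by nlinarith
  have hUV : 0 < u ^ 2 * v ^ 2 - 1 := by nlinarith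
  have hsplit : p / (u ^ 2 - 1) + q / (v ^ 2 - 1) - (p + q) / (u ^ 2 * v ^ 2 - 1)
      = (p * u * (u * (v ^ 2 - 1) ^ 2) + q * v * (v * (u ^ 2 - 1) ^ 2))
        / ((u ^ 2 - 1) * (v ^ 2 - 1) * (u ^ 2 * v ^ 2 - 1)) := by
    field_simp
    ring
  rw [← sub_lt_iff_lt_add', hsplit, div_lt_one (by positivity)]
  calc p * u * (u * (v ^ 2 - 1) ^ 2) + q * v * (v * (u ^ 2 - 1) ^ 2)
      < (u ^ 2 - 1) * (u * (v ^ 2 - 1) ^ 2) + (v ^ 2 - 1) * (v * (u ^ 2 - 1) ^ 2) := by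
        gcongr
    _ = (u ^ 2 - 1) * (v ^ 2 - 1) * ((u + v) * (u * v - 1)) := by ring
    _ ≤ (u ^ 2 - 1) * (v ^ 2 - 1) * ((u * v + 1) * (u * v - 1)) := by
        gcongr (u ^ 2 - 1) * (v ^ 2 - 1) * (?_ * _)
        · nlinarith
        · nlinarith
    _ = (u ^ 2 - 1) * (v ^ 2 - 1) * (u ^ 2 * v ^ 2 - 1) := by ring

lemma div_exp_sub_one_add_lt {p q : ℝ} (hp : 0 < p) (hq : 0 < q) :
    (p + q) / (exp (p + q) - 1) < p / (exp p - 1) + q / (exp q - 1) := by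
  have hexp_p : 0 < exp p - 1 := by linarith [add_one_lt_exp hp.ne']
  have hexp_q : 0 < exp q - 1 := by linarith [add_one_lt_exp hq.ne']
  rw [add_div]
  exact add_lt_add
    (div_lt_div_of_pos_left hp hexp_p (by gcongr; exact lt_add_of_pos_right p hq))
    (div_lt_div_of_pos_left hq hexp_q (by gcongr; exact lt_add_of_pos_left q hp))

lemma div_exp_sub_one_add_lt_add_one {p q : ℝ} (hp : 0 < p) (hq : 0 < q) :
    p / (exp p - 1) + q / (exp q - 1) < (p + q) / (exp (p + q) - 1) + 1 := by
  have hsq : ∀ s : ℝ, exp s = exp (s / 2) ^ 2 := fun s => by rw [sq, ← exp_add, add_halves]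
  have key := div_sq_sub_one_add_div_sq_sub_one_lt (one_lt_exp_iff.2 (half_pos hp))
    (one_lt_exp_iff.2 (half_pos hq)) (hsq p ▸ mul_exp_half_lt_exp_sub_one hp)
    (hsq q ▸ mul_exp_half_lt_exp_sub_one hq)
  rwa [← hsq, ← hsq, ← exp_add] at key

lemma mul_one_add_rpow_div_one_sub_rpow {a x : ℝ} (ha0 : 0 < a) (ha1 : a < 1) (hx : 0 < x) :
    x * (1 + a ^ x) / (1 - a ^ x)
      = x + 2 / log (1 / a) * (log (1 / a) * x / (exp (log (1 / a) * x) - 1)) := by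
  have ht : 0 < log (1 / a) := log_pos ((one_lt_div ha0).2 ha1)
  have hE : 0 < exp (log (1 / a) * x) - 1 := by
    linarith [add_one_lt_exp (mul_pos ht hx).ne', mul_pos ht hx]
  have hax : a ^ x = (exp (log (1 / a) * x))⁻¹ := by
    rw [rpow_def_of_pos ha0, ← exp_neg, one_div, log_inv, neg_mul, neg_neg]
  rw [hax]
  generalize exp (log (1 / a) * x) = E at hE
  have hE0 : E ≠ 0 := by linarith
  field_simp
  ring

theorem stmt_0 (a : ℝ) (ha0 : 0 < a) (ha1 : a < 1)
    (h : ℝ → ℝ)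
    (hh : ∀ x : ℝ, 0 < x → h x = x * (1 + a ^ x) / (1 - a ^ x))
    (ℓ m : ℕ) (hℓ : 1 ≤ ℓ) (hm : 1 ≤ m) :
    h ((ℓ : ℝ) + (m : ℝ)) < h ℓ + h m ∧
    h ℓ + h m < h ((ℓ : ℝ) + (m : ℝ)) + 2 / Real.log (1 / a) := by
  have hℓ0 : (0 : ℝ) < ℓ := by exact_mod_cast hℓ
  have hm0 : (0 : ℝ) < m := by exact_mod_cast hm
  set t := log (1 / a)
  have ht : 0 < t := log_pos ((one_lt_div ha0).2 ha1)
  rw [hh _ (add_pos hℓ0 hm0), hh _ hℓ0, hh _ hm0, mul_one_add_rpow_div_one_sub_rpow ha0 ha1 hℓ0,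
    mul_one_add_rpow_div_one_sub_rpow ha0 ha1 hm0,
    mul_one_add_rpow_div_one_sub_rpow ha0 ha1 (add_pos hℓ0 hm0), mul_add t]
  have h2t : 0 < 2 / t := by positivity
  have hsub := mul_lt_mul_of_pos_left
    (div_exp_sub_one_add_lt (mul_pos ht hℓ0) (mul_pos ht hm0)) h2t
  have hsup := mul_lt_mul_of_pos_left
    (div_exp_sub_one_add_lt_add_one (mul_pos ht hℓ0) (mul_pos ht hm0)) h2t
  constructor <;> linarith
end

section
/- Let a be a real number with 0 < a < 1 and define h(x) = x·(1 + a^x)/(1 − a^x) for x > 0. Let ℓ₁, m₁, ℓ₂, m₂ be natural numbers ≥ 1 with ℓ₁ + m₁ = ℓ₂ + m₂ and |(ℓ₁ : ℝ) − m₁| < |(ℓ₂ : ℝ) − m₂|. Then h(ℓ₁) + h(m₁) < h(ℓ₂) + h(m₂). -/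
/-!
Writing `a = e^{-c}` with `c > 0`, we get `h x = x coth (c x / 2)`. Its second derivative is
positive because `tanh s < s` for `s > 0`, so `h` is strictly convex on `(0, ∞)`. For a strictly
convex function, `f x + f y` with `x + y` fixed increases strictly with `|x - y|`: the closer
pair is a pair of symmetric convex combinations of the wider one.
-/

open Real Set

theorem two_mul_exp_sub_one_lt {t : ℝ} (ht : 0 < t) : 2 * (exp t - 1) < t * (exp t + 1) := by
  let g : ℝ → ℝ := fun s => s * (exp s + 1) - 2 * (exp s - 1)
  have hg : ∀ s, HasDerivAt g (s * exp s + 1 - exp s) s := fun s => by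
    refine (((hasDerivAt_id' s).fun_mul ((hasDerivAt_exp s).add_const 1)).fun_sub
      (((hasDerivAt_exp s).sub_const 1).const_mul 2)).congr_deriv ?_
    ring
  have hg_mono : StrictMonoOn g (Ici 0) := by
    refine strictMonoOn_of_deriv_pos (convex_Ici 0) (by fun_prop) fun s hs => ?_
    rw [interior_Ici] at hs
    have hexp : (1 - s) * exp s < 1 := by
      simpa [← exp_add] using mul_lt_mul_of_pos_right (one_sub_lt_exp_neg hs.ne') (exp_pos s)
    rw [(hg s).deriv]
    linarith
  simpa [g] using hg_mono self_mem_Ici ht.le ht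

theorem StrictConvexOn.add_lt_add_of_abs_sub_lt {𝕜 β : Type*} [Field 𝕜] [LinearOrder 𝕜]
    [IsStrictOrderedRing 𝕜] [AddCommGroup β] [PartialOrder β] [IsOrderedAddMonoid β]
    [Module 𝕜 β] {s : Set 𝕜} {f : 𝕜 → β} (hf : StrictConvexOn 𝕜 s f) {x y x' y' : 𝕜}
    (hx' : x' ∈ s) (hy' : y' ∈ s) (hsum : x + y = x' + y') (hspread : |x - y| < |x' - y'|) :
    f x + f y < f x' + f y' := by
  wlog hxy : x ≤ y generalizing x y
  · rw [add_comm (f x)]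
    exact this (by rw [← hsum, add_comm]) (by rwa [abs_sub_comm]) (le_of_not_ge hxy)
  wlog hxy' : x' ≤ y' generalizing x' y'
  · rw [add_comm (f x')]
    exact this hy' hx' (by rw [hsum, add_comm]) (by rwa [abs_sub_comm y']) (le_of_not_ge hxy')
  rw [abs_of_nonpos (sub_nonpos.2 hxy), abs_of_nonpos (sub_nonpos.2 hxy')] at hspread
  have hlt : x' < y' := by linarith
  have hden : 0 < y' - x' := sub_pos.2 hlt
  set θ := (y' - x) / (y' - x')
  have hθ0 : 0 < θ := div_pos (by linarith) hden
  have hθ1 : θ < 1 := (div_lt_one hden).2 (by linarith)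
  have hx : θ • x' + (1 - θ) • y' = x := by
    simp only [θ, smul_eq_mul]; field_simp; ring
  have hy : (1 - θ) • x' + θ • y' = y := by
    simp only [θ, smul_eq_mul]; field_simp; linear_combination (x' - y') * hsum
  have h₁ := hf.2 hx' hy' hlt.ne hθ0 (sub_pos.2 hθ1) (add_sub_cancel θ 1)
  have h₂ := hf.2 hx' hy' hlt.ne (sub_pos.2 hθ1) hθ0 (sub_add_cancel 1 θ)
  rw [hx] at h₁
  rw [hy] at h₂
  calc f x + f y < _ := add_lt_add h₁ h₂
    _ = f x' + f y' := by module

theorem strictConvexOn_mul_exp_add_one_div_exp_sub_one {c : ℝ} (hc : 0 < c) :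
    StrictConvexOn ℝ (Ioi 0) fun x => x * (exp (c * x) + 1) / (exp (c * x) - 1) := by
  set E : ℝ → ℝ := fun x => exp (c * x)
  have hE : ∀ x, HasDerivAt E (c * E x) x := fun x => by
    simpa [E, mul_comm] using ((hasDerivAt_id' x).const_mul c).exp
  have hE1 : ∀ x, 0 < x → 0 < E x - 1 := fun x hx =>
    sub_pos.2 (one_lt_exp_iff.2 (mul_pos hc hx))
  set G' : ℝ → ℝ := fun x => (E x ^ 2 - 1 - 2 * c * (x * E x)) / (E x - 1) ^ 2
  have hG : ∀ x, 0 < x → HasDerivAt (fun x => x * (E x + 1) / (E x - 1)) (G' x) x := by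
    intro x hx
    refine (((hasDerivAt_id' x).fun_mul ((hE x).add_const 1)).fun_div ((hE x).sub_const 1)
      (hE1 x hx).ne').congr_deriv ?_
    ring
  have hG' : ∀ x, 0 < x → HasDerivAt G'
      (2 * c * E x * (c * x * (E x + 1) - 2 * (E x - 1)) / (E x - 1) ^ 3) x := by
    intro x hx
    have hne : E x - 1 ≠ 0 := (hE1 x hx).ne'
    have hN := (((hE x).fun_pow 2).sub_const 1).fun_sub
      (((hasDerivAt_id' x).fun_mul (hE x)).const_mul (2 * c))
    refine (hN.fun_div (((hE x).sub_const 1).fun_pow 2) (pow_ne_zero 2 hne)).congr_deriv ?_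
    field_simp
    ring
  refine strictConvexOn_of_deriv2_pos (convex_Ioi 0)
    (fun x hx => (hG x hx).continuousAt.continuousWithinAt) fun x hx => ?_
  rw [interior_Ioi] at hx
  have hderiv : deriv (fun x => x * (E x + 1) / (E x - 1)) =ᶠ[nhds x] G' :=
    Filter.eventually_of_mem (Ioi_mem_nhds hx) fun y hy => (hG y hy).deriv
  rw [Function.iterate_succ_apply, Function.iterate_one, hderiv.deriv_eq, (hG' x hx).deriv]
  have hkey := two_mul_exp_sub_one_lt (mul_pos hc hx)
  exact div_pos (mul_pos (by positivity) (by linarith)) (pow_pos (hE1 x hx) 3)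

theorem strictConvexOn_mul_one_add_rpow_div_one_sub_rpow {a : ℝ} (ha0 : 0 < a) (ha1 : a < 1) :
    StrictConvexOn ℝ (Ioi 0) fun x => x * (1 + a ^ x) / (1 - a ^ x) := by
  refine (strictConvexOn_mul_exp_add_one_div_exp_sub_one (neg_pos.2 (log_neg ha0 ha1))).congr
    fun x _ => ?_
  have hexp : exp (-log a * x) = (a ^ x)⁻¹ := by rw [neg_mul, exp_neg, rpow_def_of_pos ha0]
  simp only [hexp]
  field_simp [(rpow_pos_of_pos ha0 x).ne']

theorem stmt_1 (a : ℝ) (ha0 : 0 < a) (ha1 : a < 1)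
    (h : ℝ → ℝ)
    (hh : ∀ x : ℝ, 0 < x → h x = x * (1 + a ^ x) / (1 - a ^ x))
    (ℓ₁ m₁ ℓ₂ m₂ : ℕ) (hℓ₁ : 1 ≤ ℓ₁) (hm₁ : 1 ≤ m₁) (hℓ₂ : 1 ≤ ℓ₂) (hm₂ : 1 ≤ m₂)
    (hsum : ℓ₁ + m₁ = ℓ₂ + m₂)
    (hdiff : |(ℓ₁ : ℝ) - (m₁ : ℝ)| < |(ℓ₂ : ℝ) - (m₂ : ℝ)|) :
    h ℓ₁ + h m₁ < h ℓ₂ + h m₂ := by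
  have hpos : ∀ n : ℕ, 1 ≤ n → (0 : ℝ) < n := fun n hn => Nat.cast_pos.2 hn
  rw [hh _ (hpos _ hℓ₁), hh _ (hpos _ hm₁), hh _ (hpos _ hℓ₂), hh _ (hpos _ hm₂)]
  exact (strictConvexOn_mul_one_add_rpow_div_one_sub_rpow ha0 ha1).add_lt_add_of_abs_sub_lt
    (hpos _ hℓ₂) (hpos _ hm₂) (by exact_mod_cast hsum) hdiff
end

section
/- Let a be a real number with 0 < a < 1 and define h(x) = x·(1 + a^x)/(1 − a^x) for x > 0. Let P be a nonempty multiset of natural numbers with every element ≥ 3, and let N be the sum of P. Then h(N) ≤ Σ_{x ∈ P} h(x), and moreover Σ_{x ∈ P} h(x) ≤ (N/3)·h(3) if N ≡ 0 (mod 3), Σ_{x ∈ P} h(x) ≤ h(4) + ((N − 4)/3)·h(3) if N ≡ 1 (mod 3), and Σ_{x ∈ P} h(x) ≤ h(5) + ((N − 5)/3)·h(3) if N ≡ 2 (mod 3). -/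
theorem stmt_3 (a : ℝ) (ha0 : 0 < a) (ha1 : a < 1)
    (h : ℝ → ℝ)
    (hh : ∀ x : ℝ, 0 < x → h x = x * (1 + a ^ x) / (1 - a ^ x))
    (P : Multiset ℕ) (hP : P ≠ 0) (hP3 : ∀ x ∈ P, 3 ≤ x)
    (N : ℕ) (hN : N = P.sum) :
    h N ≤ (P.map (fun x : ℕ => h x)).sum ∧
    (N % 3 = 0 → (P.map (fun x : ℕ => h x)).sum ≤ ((N : ℝ) / 3) * h 3) ∧
    (N % 3 = 1 → (P.map (fun x : ℕ => h x)).sum ≤ h 4 + (((N : ℝ) - 4) / 3) * h 3) ∧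
    (N % 3 = 2 → (P.map (fun x : ℕ => h x)).sum ≤ h 5 + (((N : ℝ) - 5) / 3) * h 3) := by
  -- basic facts about a ^ x
  have hax : ∀ x : ℝ, 0 < x → 0 < a ^ x ∧ a ^ x < 1 := fun x hx =>
    ⟨Real.rpow_pos_of_pos ha0 x, Real.rpow_lt_one ha0.le ha1 hx⟩
  -- monotonicity of g x = (1+a^x)/(1-a^x)
  have gmono : ∀ x y : ℝ, 0 < x → x ≤ y →
      (1 + a ^ y) / (1 - a ^ y) ≤ (1 + a ^ x) / (1 - a ^ x) := by
    intro x y hx hxy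
    obtain ⟨px, lx⟩ := hax x hx
    obtain ⟨py, ly⟩ := hax y (lt_of_lt_of_le hx hxy)
    have hle : a ^ y ≤ a ^ x := Real.rpow_le_rpow_of_exponent_ge ha0 ha1.le hxy
    rw [div_le_div_iff₀ (by linarith) (by linarith)]
    nlinarith
  have gpos : ∀ x : ℝ, 0 < x → 0 < (1 + a ^ x) / (1 - a ^ x) := by
    intro x hx
    obtain ⟨px, lx⟩ := hax x hx
    exact div_pos (by linarith) (by linarith)
  have hval : ∀ x : ℝ, 0 < x → h x = x * ((1 + a ^ x) / (1 - a ^ x)) := by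
    intro x hx; rw [hh x hx, mul_div_assoc]
  have hpos : ∀ x : ℝ, 0 < x → 0 < h x := by
    intro x hx; rw [hval x hx]; exact mul_pos hx (gpos x hx)
  -- subadditivity
  have subadd : ∀ x y : ℝ, 0 < x → 0 < y → h (x + y) ≤ h x + h y := by
    intro x y hx hy
    have hxy : 0 < x + y := by linarith
    rw [hval _ hxy, hval _ hx, hval _ hy]
    have g1 := gmono x (x + y) hx (by linarith)
    have g2 := gmono y (x + y) hy (by linarith)
    nlinarith [mul_le_mul_of_nonneg_left g1 hx.le, mul_le_mul_of_nonneg_left g2 hy.le]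
  -- ratio bound
  have ratio : ∀ c x : ℝ, 0 < c → c ≤ x → c * h x ≤ x * h c := by
    intro c x hc hcx
    have hx : 0 < x := lt_of_lt_of_le hc hcx
    rw [hval _ hx, hval _ hc]
    have hm := gmono c x hc hcx
    nlinarith [mul_le_mul_of_nonneg_left hm (mul_pos hc hx).le]
  -- rpow to pow at 3,4,5
  have e3 : a ^ (3 : ℝ) = a ^ (3 : ℕ) := by
    rw [← Real.rpow_natCast a 3]; norm_num
  have e4 : a ^ (4 : ℝ) = a ^ (4 : ℕ) := by
    rw [← Real.rpow_natCast a 4]; norm_num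
  have e5 : a ^ (5 : ℝ) = a ^ (5 : ℕ) := by
    rw [← Real.rpow_natCast a 5]; norm_num
  -- the key convexity-type inequality 2 h 4 ≤ h 5 + h 3
  have key3 : 2 * h 4 ≤ h 5 + h 3 := by
    have d3 : 0 < 1 - a ^ (3 : ℕ) := by
      have := (hax 3 (by norm_num)).2; rw [e3] at this; linarith
    have d4 : 0 < 1 - a ^ (4 : ℕ) := by
      have := (hax 4 (by norm_num)).2; rw [e4] at this; linarith
    have d5 : 0 < 1 - a ^ (5 : ℕ) := by
      have := (hax 5 (by norm_num)).2; rw [e5] at this; linarith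
    rw [hval 4 (by norm_num), hval 5 (by norm_num), hval 3 (by norm_num), e3, e4, e5]
    have lhs : (2 : ℝ) * (4 * ((1 + a ^ (4:ℕ)) / (1 - a ^ (4:ℕ))))
        = 8 * (1 + a ^ (4:ℕ)) / (1 - a ^ (4:ℕ)) := by ring
    have comb : (5 : ℝ) * ((1 + a ^ (5:ℕ)) / (1 - a ^ (5:ℕ)))
        + 3 * ((1 + a ^ (3:ℕ)) / (1 - a ^ (3:ℕ)))
        = (5 * (1 + a ^ (5:ℕ)) * (1 - a ^ (3:ℕ)) + 3 * (1 + a ^ (3:ℕ)) * (1 - a ^ (5:ℕ)))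
          / ((1 - a ^ (5:ℕ)) * (1 - a ^ (3:ℕ))) := by
      field_simp
    rw [lhs, comb, div_le_div_iff₀ d4 (mul_pos d5 d3)]
    nlinarith [mul_nonneg (mul_nonneg (pow_nonneg ha0.le 3)
      (pow_nonneg (by linarith : (0:ℝ) ≤ 1 - a) 4))
      (by nlinarith : (0:ℝ) ≤ 6 + 8 * a + 6 * a ^ 2)]
  -- two easy inequalities from monotonicity
  have key4 : 2 * h 5 ≤ h 4 + 2 * h 3 := by
    rw [hval 4 (by norm_num), hval 5 (by norm_num), hval 3 (by norm_num)]
    have g45 := gmono 4 5 (by norm_num) (by norm_num)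
    have g35 := gmono 3 5 (by norm_num) (by norm_num)
    linarith
  have key5 : h 4 + h 5 ≤ 3 * h 3 := by
    have r4 := ratio 3 4 (by norm_num) (by norm_num)
    have r5 := ratio 3 5 (by norm_num) (by norm_num)
    linarith
  -- the defect function
  set D : ℕ → ℝ := fun r =>
    if r = 1 then h 4 - 4 / 3 * h 3 else if r = 2 then h 5 - 5 / 3 * h 3 else 0 with hDdef
  have Dsuper : ∀ r s : ℕ, r < 3 → s < 3 → D r + D s ≤ D ((r + s) % 3) := by
    intro r s hr hs
    interval_cases r <;> interval_cases s <;> simp only [hDdef] <;> norm_num <;> linarith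
  -- single element bound
  have single : ∀ x : ℕ, 3 ≤ x → h x ≤ (x : ℝ) / 3 * h 3 + D (x % 3) := by
    intro x hx
    have hx3 : (3 : ℝ) ≤ (x : ℝ) := by exact_mod_cast hx
    have hmod : x % 3 = 0 ∨ x % 3 = 1 ∨ x % 3 = 2 := by omega
    rcases hmod with hm | hm | hm
    · rw [hm]
      have := ratio 3 x (by norm_num) hx3
      simp only [hDdef]
      norm_num
      linarith
    · rw [hm]
      simp only [hDdef]
      norm_num
      rcases eq_or_ne x 4 with rfl | hne
      · norm_num
      · have hx7 : 7 ≤ x := by omega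
        have hsub : (4 : ℕ) ≤ x := by omega
        have ecast : ((x - 4 : ℕ) : ℝ) = (x : ℝ) - 4 := by
          push_cast [Nat.cast_sub hsub]; ring
        have hpos4 : (0 : ℝ) < ((x - 4 : ℕ) : ℝ) := by rw [ecast]; linarith [show (7:ℝ) ≤ x by exact_mod_cast hx7]
        have step1 : h x ≤ h 4 + h ((x - 4 : ℕ) : ℝ) := by
          have := subadd 4 ((x - 4 : ℕ) : ℝ) (by norm_num) hpos4
          have e : (4 : ℝ) + ((x - 4 : ℕ) : ℝ) = (x : ℝ) := by rw [ecast]; ring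
          rwa [e] at this
        have step2 : 3 * h ((x - 4 : ℕ) : ℝ) ≤ ((x - 4 : ℕ) : ℝ) * h 3 := by
          apply ratio 3 _ (by norm_num)
          rw [ecast]; linarith [show (7:ℝ) ≤ x by exact_mod_cast hx7]
        rw [ecast] at step1 step2
        nlinarith [step1, step2]
    · rw [hm]
      simp only [hDdef]
      norm_num
      rcases eq_or_ne x 5 with rfl | hne
      · norm_num
      · have hx8 : 8 ≤ x := by omega
        have hsub : (5 : ℕ) ≤ x := by omega
        have ecast : ((x - 5 : ℕ) : ℝ) = (x : ℝ) - 5 := by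
          push_cast [Nat.cast_sub hsub]; ring
        have hpos5 : (0 : ℝ) < ((x - 5 : ℕ) : ℝ) := by rw [ecast]; linarith [show (8:ℝ) ≤ x by exact_mod_cast hx8]
        have step1 : h x ≤ h 5 + h ((x - 5 : ℕ) : ℝ) := by
          have := subadd 5 ((x - 5 : ℕ) : ℝ) (by norm_num) hpos5
          have e : (5 : ℝ) + ((x - 5 : ℕ) : ℝ) = (x : ℝ) := by rw [ecast]; ring
          rwa [e] at this
        have step2 : 3 * h ((x - 5 : ℕ) : ℝ) ≤ ((x - 5 : ℕ) : ℝ) * h 3 := by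
          apply ratio 3 _ (by norm_num)
          rw [ecast]; linarith [show (8:ℝ) ≤ x by exact_mod_cast hx8]
        rw [ecast] at step1 step2
        nlinarith [step1, step2]
  -- upper bound by induction
  have upper : ∀ Q : Multiset ℕ, (∀ y ∈ Q, 3 ≤ y) → Q ≠ 0 →
      (Q.map (fun x : ℕ => h x)).sum ≤ (Q.sum : ℝ) / 3 * h 3 + D (Q.sum % 3) := by
    intro Q
    induction Q using Multiset.induction_on with
    | empty => intro _ hne; exact absurd rfl hne
    | cons x Q ih =>
      intro hall _
      rcases eq_or_ne Q 0 with rfl | hQ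
      · simpa using single x (hall x (Multiset.mem_cons_self x 0))
      · have hx := hall x (Multiset.mem_cons_self x Q)
        have hQ3 : ∀ y ∈ Q, 3 ≤ y := fun y hy => hall y (Multiset.mem_cons_of_mem hy)
        have IH := ih hQ3 hQ
        have hs := single x hx
        have hDs := Dsuper (x % 3) (Q.sum % 3) (Nat.mod_lt _ (by norm_num))
          (Nat.mod_lt _ (by norm_num))
        have hmod : (x + Q.sum) % 3 = (x % 3 + Q.sum % 3) % 3 := Nat.add_mod _ _ _
        have hcast : (((x ::ₘ Q).sum : ℕ) : ℝ) = (x : ℝ) + (Q.sum : ℝ) := by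
          rw [Multiset.sum_cons]; push_cast; ring
        rw [Multiset.map_cons, Multiset.sum_cons, Multiset.sum_cons]
        calc h x + (Q.map (fun x : ℕ => h x)).sum
            ≤ ((x : ℝ) / 3 * h 3 + D (x % 3)) + ((Q.sum : ℝ) / 3 * h 3 + D (Q.sum % 3)) := by
              linarith
          _ ≤ ((x + Q.sum : ℕ) : ℝ) / 3 * h 3 + D ((x + Q.sum) % 3) := by
              rw [hmod]
              push_cast
              linarith
      -- done
  -- lower bound by induction
  have lower : ∀ Q : Multiset ℕ, (∀ y ∈ Q, 3 ≤ y) → Q ≠ 0 →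
      h (Q.sum : ℝ) ≤ (Q.map (fun x : ℕ => h x)).sum := by
    intro Q
    induction Q using Multiset.induction_on with
    | empty => intro _ hne; exact absurd rfl hne
    | cons x Q ih =>
      intro hall _
      rcases eq_or_ne Q 0 with rfl | hQ
      · simp
      · have hx := hall x (Multiset.mem_cons_self x Q)
        have hQ3 : ∀ y ∈ Q, 3 ≤ y := fun y hy => hall y (Multiset.mem_cons_of_mem hy)
        have IH := ih hQ3 hQ
        obtain ⟨y, hy⟩ := Multiset.exists_mem_of_ne_zero hQ
        have hysum : y ≤ Q.sum := Multiset.single_le_sum (fun _ _ => Nat.zero_le _) y hy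
        have hQsum : 3 ≤ Q.sum := le_trans (hQ3 y hy) hysum
        have hxR : (0 : ℝ) < (x : ℝ) := by
          have : (3:ℝ) ≤ (x:ℝ) := by exact_mod_cast hx
          linarith
        have hQR : (0 : ℝ) < (Q.sum : ℝ) := by
          have : (3:ℝ) ≤ (Q.sum:ℝ) := by exact_mod_cast hQsum
          linarith
        rw [Multiset.map_cons, Multiset.sum_cons, Multiset.sum_cons]
        have hc : (((x + Q.sum : ℕ)) : ℝ) = (x : ℝ) + (Q.sum : ℝ) := by push_cast; ring
        rw [hc]
        calc h ((x : ℝ) + (Q.sum : ℝ)) ≤ h x + h (Q.sum : ℝ) := subadd _ _ hxR hQR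
          _ ≤ h x + (Q.map (fun x : ℕ => h x)).sum := by linarith
  -- assemble
  have D0 : D 0 = 0 := by norm_num [hDdef]
  have D1 : D 1 = h 4 - 4 / 3 * h 3 := by norm_num [hDdef]
  have D2 : D 2 = h 5 - 5 / 3 * h 3 := by norm_num [hDdef]
  subst hN
  refine ⟨lower P hP3 hP, ?_, ?_, ?_⟩
  · intro hm
    have := upper P hP3 hP
    rw [hm, D0] at this
    linarith
  · intro hm
    have := upper P hP3 hP
    rw [hm, D1] at this
    linarith
  · intro hm
    have := upper P hP3 hP
    rw [hm, D2] at this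
    linarith
end

section
/- Let G be a simple graph on a vertex type V, and let α, β : G.Dart → ℝ be antisymmetric dart functions, i.e., α(d.symm) = −α(d) and β(d.symm) = −β(d) for every dart d. Suppose that for every vertex u and every closed walk c : G.Walk u u, the sum of α over the darts of c equals the sum of β over the darts of c. Then for any two vertices u, v and any two walks p, p' : G.Walk u v, the sum of (β − α) over the darts of p equals the sum of (β − α) over the darts of p'. -/
theorem stmt_4 {V : Type*} (G : SimpleGraph V) (α β : G.Dart → ℝ)
    (hα : ∀ d : G.Dart, α d.symm = -α d) (hβ : ∀ d : G.Dart, β d.symm = -β d)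
    (hc : ∀ (u : V) (c : G.Walk u u),
      (c.darts.map α).sum = (c.darts.map β).sum)
    (u v : V) (p p' : G.Walk u v) :
    (p.darts.map (fun d => β d - α d)).sum = (p'.darts.map (fun d => β d - α d)).sum := by
  have key := hc u (p.append p'.reverse)
  simp only [SimpleGraph.Walk.darts_append, SimpleGraph.Walk.darts_reverse, List.map_append,
    List.map_reverse, List.sum_append, List.sum_reverse, List.map_map] at key
  have hα' : ∀ l : List G.Dart, (l.map (α ∘ SimpleGraph.Dart.symm)).sum = -(l.map α).sum := by
    intro l
    induction l with
    | nil => simp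
    | cons d l ih => simp [ih, hα d]; ring
  have hβ' : ∀ l : List G.Dart, (l.map (β ∘ SimpleGraph.Dart.symm)).sum = -(l.map β).sum := by
    intro l
    induction l with
    | nil => simp
    | cons d l ih => simp [ih, hβ d]; ring
  rw [hα' p'.darts, hβ' p'.darts] at key
  have hsub : ∀ q : G.Walk u v, (q.darts.map (fun d => β d - α d)).sum =
      (q.darts.map β).sum - (q.darts.map α).sum := by
    intro q
    induction q.darts with
    | nil => simp
    | cons d l ih => simp [ih]; ring
  rw [hsub, hsub]; linarith
end

section
/- Let G be a connected simple graph on a vertex type V, and let τ : V → V → ZMod 2 satisfy τ(x, y) = τ(y, x) for all x, y. Define the double covering graph G^τ on V × ZMod 2 by declaring (x, j) adjacent to (y, k) if and only if x is adjacent to y in G and k = j + τ(x, y). Then G^τ is connected if and only if there exists a vertex u and a closed walk c : G.Walk u u such that the sum over the darts d of c of τ(d.fst, d.snd) equals 1 in ZMod 2. -/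
theorem stmt_5 {V : Type*} (G : SimpleGraph V) (hG : G.Connected)
    (τ : V → V → ZMod 2) (hτ : ∀ x y, τ x y = τ y x)
    (Gτ : SimpleGraph (V × ZMod 2))
    (hGτ : ∀ p q : V × ZMod 2,
      Gτ.Adj p q ↔ (G.Adj p.1 q.1 ∧ q.2 = p.2 + τ p.1 q.1)) :
    Gτ.Connected ↔
      ∃ (u : V) (c : G.Walk u u),
        (c.darts.map (fun d => τ d.fst d.snd)).sum = 1 := by
  -- lifting lemma
  have lift : ∀ {u v : V} (w : G.Walk u v) (j : ZMod 2),
      Gτ.Reachable (u, j) (v, j + (w.darts.map (fun d => τ d.fst d.snd)).sum) := by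
    intro u v w
    induction w with
    | nil => intro j; simp [SimpleGraph.Reachable.refl]
    | cons h p ih =>
      intro j
      rename_i a b c
      have hadj : Gτ.Adj (a, j) (b, j + τ a b) := by
        rw [hGτ]; exact ⟨h, rfl⟩
      have := ih (j + τ a b)
      refine (hadj.reachable.trans ?_)
      simpa [add_assoc] using this
  -- projection lemma
  have proj : ∀ {p q : V × ZMod 2} (w : Gτ.Walk p q),
      ∃ w' : G.Walk p.1 q.1, q.2 = p.2 + (w'.darts.map (fun d => τ d.fst d.snd)).sum := by
    intro p q w
    induction w with
    | nil => exact ⟨SimpleGraph.Walk.nil, by simp⟩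
    | cons h w ih =>
      rename_i a b c
      obtain ⟨w', hw'⟩ := ih
      rw [hGτ] at h
      exact ⟨SimpleGraph.Walk.cons h.1 w', by simp [hw', h.2, add_assoc]⟩
  constructor
  · intro hconn
    obtain ⟨u⟩ := hG.nonempty
    obtain ⟨w⟩ := hconn ((u : V), (0 : ZMod 2)) (u, 1)
    obtain ⟨c, hc⟩ := proj w
    exact ⟨u, c, by simpa using hc.symm⟩
  · rintro ⟨u, c, hc⟩
    have flip : ∀ a b : ZMod 2, Gτ.Reachable (u, a) (u, b) := by
      intro a b
      have hab : b = a ∨ b = a + 1 := by revert a b; decide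
      rcases hab with h | h
      · subst h; exact SimpleGraph.Reachable.refl _
      · subst h
        have := lift c a
        rw [hc] at this
        exact this
    rw [SimpleGraph.connected_iff]
    refine ⟨?_, ⟨(u, 0)⟩⟩
    rintro ⟨x, j⟩ ⟨y, k⟩
    obtain ⟨w1⟩ := (hG.preconnected x u)
    obtain ⟨w2⟩ := (hG.preconnected y u)
    have h1 := lift w1 j
    have h2 := lift w2 k
    exact h1.trans ((flip _ _).trans h2.symm)
end

section
/- Let n ≥ 1, let P be an n×n complex unitary matrix with P^n = 1, and let a, b, c, d ∈ ℂ be such that C = !![a, b; c, d] is unitary with b ≠ 0. Set ω := b·c − a·d and Q := (b·c·ω) • (P · (1 − (a·ω)•P)⁻¹) (the inverse exists since |a| < 1). Then Q·Qᴴ = (|b|² / |1 − (aω)^n|²) • Σ_{k=0}^{n−1} ( (aω)^k·(1 − |a|^{2(n−k)}) + (conj(aω))^{n−k}·(1 − |a|^{2k}) ) • P^k, where |·| denotes the complex absolute value. -/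
/-!
Put `z = aω`. Since `|ω| = |det C| = 1` and `|a| < 1`, the relation `Pⁿ = 1` sums the geometric
series: `(1 - zP)⁻¹ = (1 - zⁿ)⁻¹ S` with `S = ∑_{i<n} (zP)ⁱ`. As `P` is unitary and commutes with
`S`, `Q Qᴴ = |bcω|² / |1 - zⁿ|² · S Sᴴ`, and `|bcω|² = |b|² (1 - |a|²)`. In
`S Sᴴ = ∑_{i,j<n} zⁱ z̄ʲ Pⁱ (Pʲ)ᴴ` group the pairs by `m = i - j mod n`: since `(Pʲ)ᴴ = P⁻ʲ` and
`Pⁿ = 1`, the pairs with `i ≥ j` contribute `zᵐ ∑_{j<n-m} |z|²ʲ` to `Pᵐ`, those with `i < j`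
contribute `z̄ⁿ⁻ᵐ ∑_{i<m} |z|²ⁱ`, and multiplying by `1 - |z|²` sums both geometric series.
-/

open Matrix Finset ComplexConjugate

theorem Finset.sum_range_sum_range_eq_sum_sub_mod {M : Type*} [AddCommMonoid M] (n : ℕ)
    (f : ℕ → ℕ → M) :
    ∑ i ∈ range n, ∑ j ∈ range n, f i j =
      ∑ m ∈ range n, (∑ j ∈ range (n - m), f (m + j) j + ∑ i ∈ range m, f i (n - m + i)) := by
  have hsplit : ∀ j ∈ range n, ∑ i ∈ range n, f i j =
      ∑ k ∈ range (n - j), f (j + k) j + ∑ i ∈ range j, f i j := by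
    intro j hj
    obtain ⟨k, rfl⟩ := Nat.exists_eq_add_of_le (mem_range.1 hj).le
    rw [sum_range_add, add_comm, Nat.add_sub_cancel_left]
  rw [sum_comm, sum_congr rfl hsplit, sum_add_distrib, sum_add_distrib]
  congr 1
  · rw [sum_comm' (t' := range n) (s' := fun k => range (n - k)) (by simp; omega)]
    simp only [add_comm]
  · set r := (range n ×ˢ range n).filter fun p => p.2 < p.1
    have hr (g : ℕ → ℕ → M) : ∑ x ∈ range n, ∑ i ∈ range x, g x i = ∑ p ∈ r, g p.1 p.2 :=
      (sum_finset_product' r _ _ (by simp [r]; omega)).symm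
    rw [hr fun j i => f i j, hr fun m i => f i (n - m + i)]
    refine sum_nbij' (fun p => (n - p.1 + p.2, p.2)) (fun p => (n - p.1 + p.2, p.2))
      ?_ ?_ ?_ ?_ ?_ <;> simp only [r, mem_filter, mem_product, mem_range, Prod.forall,
        Prod.mk.injEq, and_true] <;> intro j i _
    all_goals first | omega | congr 1; omega

theorem star_pow_sub_of_pow_eq_one {M : Type*} [Monoid M] [StarMul M] {P : M} {n m : ℕ}
    (hP : P ∈ unitary M) (hPn : P ^ n = 1) (hm : m ≤ n) : star (P ^ (n - m)) = P ^ m := by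
  calc star (P ^ (n - m)) = star (P ^ (n - m)) * (P ^ (n - m) * P ^ m) := by
        rw [← pow_add, Nat.sub_add_cancel hm, hPn, mul_one]
    _ = P ^ m := by rw [← mul_assoc, Unitary.star_mul_self_of_mem (pow_mem hP _), one_mul]

section StarAlgebra

variable {A : Type*} [Ring A] [StarRing A] [Algebra ℂ A] [StarModule ℂ A] {P : A}

theorem smul_pow_mul_star_smul_pow (hP : P ∈ unitary A) (z : ℂ) (j : ℕ) :
    (z • P) ^ j * star ((z • P) ^ j) = ((‖z‖ : ℂ) ^ 2) ^ j • 1 := by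
  rw [smul_pow, star_smul, smul_mul_smul, Unitary.mul_star_self_of_mem (pow_mem hP j),
    Complex.star_def, map_pow, ← mul_pow, Complex.mul_conj']

theorem smul_pow_add_mul_star_smul_pow (hP : P ∈ unitary A) (z : ℂ) (m j : ℕ) :
    (z • P) ^ (m + j) * star ((z • P) ^ j) = (z ^ m * ((‖z‖ : ℂ) ^ 2) ^ j) • P ^ m := by
  rw [pow_add, mul_assoc, smul_pow_mul_star_smul_pow hP, smul_pow, smul_mul_smul, mul_one]

theorem smul_pow_mul_star_smul_pow_sub_add {n m : ℕ} (hP : P ∈ unitary A) (hPn : P ^ n = 1)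
    (hm : m ≤ n) (z : ℂ) (i : ℕ) :
    (z • P) ^ i * star ((z • P) ^ (n - m + i)) =
      (conj z ^ (n - m) * ((‖z‖ : ℂ) ^ 2) ^ i) • P ^ m := by
  rw [pow_add, star_mul, ← mul_assoc, smul_pow_mul_star_smul_pow hP, smul_pow,
    star_smul, star_pow_sub_of_pow_eq_one hP hPn hm, smul_one_mul, smul_smul, mul_comm,
    Complex.star_def, map_pow]

theorem one_sub_norm_sq_smul_geom_sum_mul_star {n : ℕ} (hP : P ∈ unitary A) (hPn : P ^ n = 1)
    (z : ℂ) :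
    (1 - (‖z‖ : ℂ) ^ 2) •
        ((∑ i ∈ range n, (z • P) ^ i) * star (∑ i ∈ range n, (z • P) ^ i)) =
      ∑ m ∈ range n,
        (z ^ m * (1 - (‖z‖ : ℂ) ^ (2 * (n - m))) + conj z ^ (n - m) * (1 - (‖z‖ : ℂ) ^ (2 * m))) •
          P ^ m := by
  rw [star_sum, sum_mul_sum, sum_range_sum_range_eq_sum_sub_mod, smul_sum]
  refine sum_congr rfl fun m hm => ?_
  simp only [smul_pow_add_mul_star_smul_pow hP,
    smul_pow_mul_star_smul_pow_sub_add hP hPn (mem_range.1 hm).le, ← sum_smul, ← add_smul,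
    smul_smul, ← mul_sum]
  rw [pow_mul, pow_mul, ← mul_neg_geom_sum _ (n - m), ← mul_neg_geom_sum _ m]
  congr 1
  ring

end StarAlgebra

theorem Matrix.inv_one_sub_smul_of_pow_eq_one {K ι : Type*} [Field K] [Fintype ι] [DecidableEq ι]
    {P : Matrix ι ι K} {n : ℕ} (hPn : P ^ n = 1) {z : K} (hz : z ^ n ≠ 1) :
    (1 - z • P)⁻¹ = (1 - z ^ n)⁻¹ • ∑ i ∈ range n, (z • P) ^ i := by
  refine inv_eq_right_inv ?_
  rw [mul_smul_comm, mul_neg_geom_sum, smul_pow, hPn, ← one_smul K (1 : Matrix ι ι K), smul_smul,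
    mul_one, ← sub_smul, smul_smul, inv_mul_cancel₀ (sub_ne_zero.2 hz.symm), one_smul]

theorem Matrix.norm_sq_add_norm_sq_of_mem_unitaryGroup_fin_two {𝕜 : Type*} [RCLike 𝕜]
    {a b c d : 𝕜} (h : !![a, b; c, d] ∈ unitaryGroup (Fin 2) 𝕜) :
    ‖a‖ ^ 2 + ‖b‖ ^ 2 = 1 ∧ ‖a‖ ^ 2 + ‖c‖ ^ 2 = 1 := by
  have hrow := congrFun (congrFun (mem_unitaryGroup_iff.1 h) 0) 0
  have hcol := congrFun (congrFun (mem_unitaryGroup_iff'.1 h) 0) 0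
  simp only [mul_apply, of_apply, cons_val', cons_val_fin_one, cons_val_zero, cons_val_one,
    star_apply, RCLike.star_def, RCLike.mul_conj, RCLike.conj_mul, Fin.sum_univ_two,
    one_apply_eq] at hrow hcol
  exact ⟨by exact_mod_cast hrow, by exact_mod_cast hcol⟩

theorem stmt_10 (n : ℕ) (hn : 1 ≤ n)
    (P : Matrix (Fin n) (Fin n) ℂ) (hP : Pᴴ * P = 1) (hPn : P ^ n = 1)
    (a b c d : ℂ)
    (hC : (!![a, b; c, d])ᴴ * !![a, b; c, d] = 1) (hb : b ≠ 0)
    (ω : ℂ) (hω : ω = b * c - a * d)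
    (Q : Matrix (Fin n) (Fin n) ℂ)
    (hQ : Q = (b * c * ω) • (P * (1 - (a * ω) • P)⁻¹)) :
    Q * Qᴴ = ((‖b‖ ^ 2 / ‖1 - (a * ω) ^ n‖ ^ 2 : ℝ) : ℂ) •
      ∑ k ∈ Finset.range n,
        ((a * ω) ^ k * (1 - ((‖a‖ : ℝ) : ℂ) ^ (2 * (n - k))) +
          ((starRingEnd ℂ) (a * ω)) ^ (n - k) * (1 - ((‖a‖ : ℝ) : ℂ) ^ (2 * k))) •
          P ^ k := by
  have hCu : !![a, b; c, d] ∈ unitaryGroup (Fin 2) ℂ := mem_unitaryGroup_iff'.2 hC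
  have hPu : P ∈ unitary (Matrix (Fin n) (Fin n) ℂ) := mem_unitaryGroup_iff'.2 hP
  obtain ⟨hab, hac⟩ := norm_sq_add_norm_sq_of_mem_unitaryGroup_fin_two hCu
  have hω1 : ‖ω‖ = 1 := by
    rw [hω, ← neg_sub, norm_neg, ← det_fin_two_of]
    exact CStarRing.norm_of_mem_unitary (det_of_mem_unitary hCu)
  have hz : ‖a * ω‖ = ‖a‖ := by rw [norm_mul, hω1, mul_one]
  have ha : ‖a‖ < 1 := by
    rw [← sq_lt_one_iff₀ (norm_nonneg a)]
    linarith [pow_pos (norm_pos_iff.2 hb) 2]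
  have hzn : (a * ω) ^ n ≠ 1 := fun h => by
    have := congrArg norm h
    rw [norm_pow, norm_one, hz] at this
    exact (pow_lt_one₀ (norm_nonneg _) ha (by omega)).ne this
  set S := ∑ i ∈ range n, ((a * ω) • P) ^ i
  have hSP : Commute S P :=
    Commute.sum_left _ _ _ fun i _ => ((Commute.refl P).smul_left _).pow_left i
  have hQS : Q = (b * c * ω * (1 - (a * ω) ^ n)⁻¹) • (S * P) := by
    rw [hQ, inv_one_sub_smul_of_pow_eq_one hPn hzn, mul_smul_comm, smul_smul, hSP.eq]
  have hnorm : ‖b * c * ω * (1 - (a * ω) ^ n)⁻¹‖ ^ 2 =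
      ‖b‖ ^ 2 / ‖1 - (a * ω) ^ n‖ ^ 2 * (1 - ‖a‖ ^ 2) := by
    rw [norm_mul, norm_mul, norm_mul, norm_inv, hω1, ← eq_sub_of_add_eq' hac]
    ring
  calc Q * Qᴴ = ((‖b * c * ω * (1 - (a * ω) ^ n)⁻¹‖ ^ 2 : ℝ) : ℂ) • (S * star S) := by
        rw [← star_eq_conjTranspose, hQS, star_smul, smul_mul_smul, Complex.star_def,
          Complex.mul_conj', star_mul, mul_assoc S, ← mul_assoc P,
          Unitary.mul_star_self_of_mem hPu, one_mul, Complex.ofReal_pow]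
    _ = _ := by
        rw [hnorm, ← hz, Complex.ofReal_mul, mul_smul, Complex.ofReal_sub, Complex.ofReal_one,
          Complex.ofReal_pow, one_sub_norm_sq_smul_geom_sum_mul_star hPu hPn]
end

section
/- Let F be a nonempty finite set, n : F → ℕ with 3 ≤ n(f) for all f ∈ F, and D : F → Multiset ℕ with 0 < d < n(f) for every d ∈ D(f). Set A := Σ_{f∈F} n(f). For δ ∈ (0,1) put a := 1 − δ and define ℰ(δ) := (1/A)·((2 + (1 − a²))/(1 − a²))·Σ_{f∈F} n(f)·(1 + a^{n(f)})/(1 − a^{n(f)}) − (1/A)·(a/(1 − a²))·Σ_{f∈F} (1/(1 − a^{n(f)}))·Σ_{d ∈ D(f)} (a^d + a^{n(f) − d}). Then δ²·ℰ(δ) tends to (1/A)·( 2·|F| − Σ_{f∈F} card(D(f))/n(f) ) as δ → 0 from the right. -/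
open Filter Topology

/-! With `a = 1 - δ`, the geometric sum gives `1 - a ^ n = δ (1 + a + ⋯ + a ^ (n - 1))`, so
`δ / (1 - a ^ n) → 1 / n` as `δ → 0`. Distributing `δ ^ 2` as one such factor for `1 - a ^ 2` and one
for `1 - a ^ (n f)` in every summand of `ℰ(δ)` leaves only factors continuous at `δ = 0`, where
`a ^ k = 1`; the `f`-th summands then tend to `2 · (1 / 2) · 2 n(f) / n(f) = 2` and to
`(1 / 2) · 2 |D(f)| / n(f)`. -/

lemma tendsto_div_one_sub_one_sub_pow {n : ℕ} (hn : n ≠ 0) :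
    Tendsto (fun δ : ℝ => δ / (1 - (1 - δ) ^ n)) (𝓝[≠] 0) (𝓝 (1 / n)) := by
  have hsum : Tendsto (fun δ : ℝ => 1 / ∑ i ∈ Finset.range n, (1 - δ) ^ i) (𝓝 0) (𝓝 (1 / n)) := by
    have hc : Continuous fun δ : ℝ => ∑ i ∈ Finset.range n, (1 - δ) ^ i := by fun_prop
    simpa using (hc.tendsto 0).inv₀ (by simpa using hn)
  refine (hsum.mono_left nhdsWithin_le_nhds).congr' ?_
  filter_upwards [self_mem_nhdsWithin] with δ (hδ : δ ≠ 0)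
  rw [← mul_neg_geom_sum, sub_sub_cancel, div_mul_cancel_left₀ hδ, one_div]

lemma tendsto_multiset_sum_pow_add_pow (M : Multiset ℕ) (m : ℕ) :
    Tendsto (fun δ : ℝ => (M.map fun d => (1 - δ) ^ d + (1 - δ) ^ (m - d)).sum) (𝓝 0)
      (𝓝 (2 * M.card)) := by
  have hc : Continuous fun δ : ℝ => (M.map fun d => (1 - δ) ^ d + (1 - δ) ^ (m - d)).sum := by
    fun_prop
  simpa [two_mul] using hc.tendsto 0

theorem stmt_12_general {F : Type*} [Fintype F]
    (n : F → ℕ) (hn : ∀ f, 3 ≤ n f)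
    (D : F → Multiset ℕ)
    (A : ℝ)
    (E : ℝ → ℝ)
    (hE : ∀ δ ∈ Set.Ioo (0 : ℝ) 1, E δ =
      (1 / A) * ((2 + (1 - (1 - δ) ^ 2)) / (1 - (1 - δ) ^ 2)) *
          ∑ f, (n f : ℝ) * (1 + (1 - δ) ^ (n f)) / (1 - (1 - δ) ^ (n f))
        - (1 / A) * ((1 - δ) / (1 - (1 - δ) ^ 2)) *
          ∑ f, (1 / (1 - (1 - δ) ^ (n f))) *
            ((D f).map (fun d : ℕ => (1 - δ) ^ d + (1 - δ) ^ (n f - d))).sum) :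
    Filter.Tendsto (fun δ : ℝ => δ ^ 2 * E δ) (nhdsWithin 0 (Set.Ioi 0))
      (nhds ((1 / A) *
        (2 * (Fintype.card F : ℝ) - ∑ f, ((D f).card : ℝ) / (n f : ℝ)))) := by
  have hn0 (f : F) : n f ≠ 0 := by have := hn f; omega
  have hlim {n : ℕ} (hn : n ≠ 0) :=
    (tendsto_div_one_sub_one_sub_pow hn).mono_left (nhdsGT_le_nhdsNE 0)
  have hcont {c : ℝ} {g : ℝ → ℝ} (hg : Continuous g) (h0 : g 0 = c) : Tendsto g (𝓝[>] 0) (𝓝 c) :=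
    h0 ▸ tendsto_nhdsWithin_of_tendsto_nhds (hg.tendsto 0)
  have hG : Tendsto (fun δ : ℝ => (1 / A) *
      (∑ f, (2 + (1 - (1 - δ) ^ 2)) * (δ / (1 - (1 - δ) ^ 2)) *
          ((n f : ℝ) * (1 + (1 - δ) ^ (n f))) * (δ / (1 - (1 - δ) ^ (n f)))
        - ∑ f, (1 - δ) * (δ / (1 - (1 - δ) ^ 2)) * (δ / (1 - (1 - δ) ^ (n f))) *
          ((D f).map (fun d : ℕ => (1 - δ) ^ d + (1 - δ) ^ (n f - d))).sum))
      (𝓝[>] 0) (𝓝 ((1 / A) * (∑ f : F, (2 : ℝ) * (1 / (2 : ℕ)) * ((n f : ℝ) * 2) * (1 / (n f : ℝ))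
        - ∑ f : F, (1 : ℝ) * (1 / (2 : ℕ)) * (1 / (n f : ℝ)) * (2 * ((D f).card : ℝ))))) := by
    refine .const_mul _ (.sub (tendsto_finsetSum _ fun f _ => ?_) (tendsto_finsetSum _ fun f _ => ?_))
    · exact (((hcont (by fun_prop) (by norm_num)).mul (hlim two_ne_zero)).mul
        (hcont (by fun_prop) (by norm_num))).mul (hlim (hn0 f))
    · exact (((hcont (by fun_prop) (by norm_num)).mul (hlim two_ne_zero)).mul (hlim (hn0 f))).mul
        (tendsto_nhdsWithin_of_tendsto_nhds (tendsto_multiset_sum_pow_add_pow _ _))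
  refine (hG.congr' ?_).trans_eq ?_
  · filter_upwards [Ioo_mem_nhdsGT one_pos] with δ hδ
    rw [hE δ hδ]
    simp only [mul_sub, Finset.mul_sum]
    congr 1 <;> exact Finset.sum_congr rfl fun f _ => by ring
  · congr 2
    rw [← Finset.sum_sub_distrib, mul_comm 2 (Fintype.card F : ℝ), ← nsmul_eq_mul,
      ← Finset.card_univ, ← Finset.sum_const, ← Finset.sum_sub_distrib]
    refine Finset.sum_congr rfl fun f _ => ?_
    field_simp [hn0 f]
    ring

theorem stmt_12 {F : Type*} [Fintype F] [Nonempty F]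
    (n : F → ℕ) (hn : ∀ f, 3 ≤ n f)
    (D : F → Multiset ℕ) (hD : ∀ f, ∀ d ∈ D f, 0 < d ∧ d < n f)
    (A : ℝ) (hA : A = ∑ f, (n f : ℝ))
    (E : ℝ → ℝ)
    (hE : ∀ δ ∈ Set.Ioo (0 : ℝ) 1, E δ =
      (1 / A) * ((2 + (1 - (1 - δ) ^ 2)) / (1 - (1 - δ) ^ 2)) *
          ∑ f, (n f : ℝ) * (1 + (1 - δ) ^ (n f)) / (1 - (1 - δ) ^ (n f))
        - (1 / A) * ((1 - δ) / (1 - (1 - δ) ^ 2)) *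
          ∑ f, (1 / (1 - (1 - δ) ^ (n f))) *
            ((D f).map (fun d : ℕ => (1 - δ) ^ d + (1 - δ) ^ (n f - d))).sum) :
    Filter.Tendsto (fun δ : ℝ => δ ^ 2 * E δ) (nhdsWithin 0 (Set.Ioi 0))
      (nhds ((1 / A) *
        (2 * (Fintype.card F : ℝ) - ∑ f, ((D f).card : ℝ) / (n f : ℝ)))) :=
  stmt_12_general n hn D A E hE
end

section
/- Let n ≥ 5, ℓ ≥ 1 and g ≥ 0 be integers with n·(n−1) ≥ 3·(ℓ − 1) + 8 and 2·g = 2 − n + n·(n−1)/2 − ℓ. If n mod 12 ∉ {2, 5}, then g > ⌈(n−3)·(n−4)/12⌉. -/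
theorem stmt_15 (n ℓ g : ℤ) (hn : 5 ≤ n) (hℓ : 1 ≤ ℓ) (hg : 0 ≤ g)
    (h : n * (n - 1) ≥ 3 * (ℓ - 1) + 8)
    (hgk : 2 * g = 2 - n + n * (n - 1) / 2 - ℓ)
    (hmod : n % 12 ≠ 2 ∧ n % 12 ≠ 5) :
    g > ⌈(((n : ℚ) - 3) * ((n : ℚ) - 4)) / 12⌉ := by
  obtain ⟨h2, h5⟩ := hmod
  have hm2 : 2 ∣ n * (n - 1) := by
    rcases Int.even_or_odd n with ⟨k, hk⟩ | ⟨k, hk⟩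
    · exact ⟨k * (n - 1), by rw [hk]; ring⟩
    · exact ⟨n * k, by rw [hk]; ring⟩
  obtain ⟨p, hp⟩ := hm2
  have h4g : 4 * g = 4 - 2 * n + n * (n - 1) - 2 * ℓ := by
    have hdiv : n * (n - 1) / 2 = p := by rw [hp]; omega
    rw [hdiv] at hgk; omega
  clear hgk hp
  suffices key : n * (n - 1) - 6 * n + 24 ≤ 12 * g by
    have h1 : ⌈(((n : ℚ) - 3) * ((n : ℚ) - 4)) / 12⌉ ≤ g - 1 := by
      rw [Int.ceil_le, div_le_iff₀ (by norm_num : (0:ℚ) < 12)]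
      have : ((n * (n - 1) - 6 * n + 24 : ℤ) : ℚ) ≤ ((12 * g : ℤ) : ℚ) := by
        exact_mod_cast key
      push_cast at this ⊢
      nlinarith [this]
    omega
  obtain ⟨q, r, hq, hr⟩ : ∃ q r, n = 12 * q + r ∧
      (r = 0 ∨ r = 1 ∨ r = 3 ∨ r = 4 ∨ r = 6 ∨ r = 7 ∨ r = 8 ∨ r = 9 ∨
        r = 10 ∨ r = 11) :=
    ⟨n / 12, n % 12, by omega, by omega⟩
  subst hq
  have hK : (12 * q + r) * (12 * q + r - 1) =
      12 * (12 * q * q + 2 * q * r - q) + (r * r - r) := by ring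
  set K := 12 * q * q + 2 * q * r - q with hKdef
  rw [hK] at h h4g ⊢
  rcases hr with rfl | rfl | rfl | rfl | rfl | rfl | rfl | rfl | rfl | rfl <;> omega
end
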